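/- For distinct x, y ∈ (0, 1), the logarithmic mean satisfies L(arcsinh x, arcsinh y) ≤ arcsinh((x+y)/2). -/

import Mathlib

/-! The logarithmic mean is at most the arithmetic mean (from the series of
`log (1 + a)` in powers of `a / (a + 2)`, whose first term is `2a / (a + 2)`), and
`arsinh` is concave on `[0, ∞)` since its derivative `(1 + x²)^(-1/2)` decreases there;
so `L(arsinh x, arsinh y) ≤ (arsinh x + arsinh y) / 2 ≤ arsinh ((x + y) / 2)`. -/

noncomputable def logMean (a b : ℝ) : ℝ := (a - b) / (Real.log a - Real.log b)

open Real

theorem two_mul_div_add_two_le_log_one_add {a : ℝ} (ha : 0 ≤ a) :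
    2 * a / (a + 2) ≤ log (1 + a) := by
  simpa [mul_div_assoc] using le_hasSum (hasSum_log_one_add ha) 0 fun k _ => by positivity

theorem logMean_comm (a b : ℝ) : logMean a b = logMean b a := by
  rw [logMean, logMean, ← neg_sub b a, ← neg_sub (log b), neg_div_neg_eq]

theorem logMean_le_add_div_two {a b : ℝ} (ha : 0 < a) (hb : 0 < b) :
    logMean a b ≤ (a + b) / 2 := by
  wlog hab : a ≤ b generalizing a b
  · rw [logMean_comm, add_comm]
    exact this hb ha (le_of_not_ge hab)
  have hlog : 2 * (b - a) / (a + b) ≤ log b - log a := by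
    rw [← log_div hb.ne' ha.ne', show b / a = 1 + (b - a) / a by field_simp; ring]
    convert two_mul_div_add_two_le_log_one_add (div_nonneg (sub_nonneg.2 hab) ha.le) using 1
    rw [div_eq_div_iff (by positivity) (by positivity)]
    field_simp
    ring
  rw [div_le_iff₀ (by positivity)] at hlog
  rw [logMean_comm, logMean]
  apply div_le_of_le_mul₀ (sub_nonneg.2 (log_le_log ha hab)) (by positivity)
  linarith

theorem concaveOn_arsinh : ConcaveOn ℝ (Set.Ici 0) arsinh := by
  refine AntitoneOn.concaveOn_of_deriv (convex_Ici 0) continuous_arsinh.continuousOn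
    differentiable_arsinh.differentiableOn fun s hs t ht hst => ?_
  rw [interior_Ici] at hs ht
  rw [(hasDerivAt_arsinh s).deriv, (hasDerivAt_arsinh t).deriv]
  gcongr
  exact hs.le

theorem stmt11_general (x y : ℝ) (hx : x ∈ Set.Ioo (0:ℝ) 1) (hy : y ∈ Set.Ioo (0:ℝ) 1) :
    logMean (Real.arsinh x) (Real.arsinh y) ≤ Real.arsinh ((x + y) / 2) := by
  calc logMean (arsinh x) (arsinh y)
      ≤ (arsinh x + arsinh y) / 2 :=
        logMean_le_add_div_two (arsinh_pos_iff.2 hx.1) (arsinh_pos_iff.2 hy.1)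
    _ ≤ arsinh ((x + y) / 2) := by
        have h := concaveOn_arsinh.2 hx.1.le hy.1.le (by norm_num : (0:ℝ) ≤ 1 / 2)
          (by norm_num : (0:ℝ) ≤ 1 / 2) (by norm_num)
        rw [smul_eq_mul, smul_eq_mul, smul_eq_mul, smul_eq_mul] at h
        rw [show (x + y) / 2 = 1 / 2 * x + 1 / 2 * y by ring]
        linarith

theorem stmt11 (x y : ℝ) (hx : x ∈ Set.Ioo (0:ℝ) 1) (hy : y ∈ Set.Ioo (0:ℝ) 1)
    (hxy : x ≠ y) :
    logMean (Real.arsinh x) (Real.arsinh y) ≤ Real.arsinh ((x + y) / 2) :=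
  stmt11_general x y hx hy
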